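/- Let S = {s_1, …, s_t} be a finite set of integers with t ≥ 3, 1 < s_1 < s_2 < … < s_t, and gcd(s_1, …, s_t) = 1, and let F(S) be the Frobenius number of the numerical semigroup ⟨S⟩. If MinCost_S(k) = GreedyCost_S(k) for every representable k with 0 < k ≤ F(S) + s_t + s_{t−1}, then MinCost_S(k) = GreedyCost_S(k) for every representable k > 0; equivalently, if S has a counterexample, then the smallest counterexample is at most F(S) + s_t + s_{t−1}. -/
import Mathlib


open Finset

/-- `a` is a representation of `k` with respect to the denominations `s`:
a vector of nonnegative integers with `∑ i, a i * s i = k`. -/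
def IsRep {t : ℕ} (s : Fin t → ℕ) (k : ℕ) (a : Fin t → ℕ) : Prop :=
  ∑ i, a i * s i = k

/-- `k` is representable with respect to `s`. -/
def Representable {t : ℕ} (s : Fin t → ℕ) (k : ℕ) : Prop :=
  ∃ a, IsRep s k a

/-- `MinCost_S(k)`: the minimum cost `∑ i, a i` over all representations `a` of `k`. -/
noncomputable def minCost {t : ℕ} (s : Fin t → ℕ) (k : ℕ) : ℕ :=
  sInf {c | ∃ a, IsRep s k a ∧ ∑ i, a i = c}

/-- `a` is the greedy representation of `k`: the representation whose reversed vector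
`(a_t, …, a_1)` is greatest in lexicographic order among the reversed vectors of all
representations of `k`. -/
def IsGreedyRep {t : ℕ} (s : Fin t → ℕ) (k : ℕ) (a : Fin t → ℕ) : Prop :=
  IsRep s k a ∧
    ∀ b, IsRep s k b → b = a ∨ ∃ i, b i < a i ∧ ∀ j, i < j → b j = a j

/-- `GreedyCost_S(k)`: the cost of the greedy representation of `k`
(the greedy representation is unique when it exists). -/
noncomputable def greedyCost {t : ℕ} (s : Fin t → ℕ) (k : ℕ) : ℕ :=
  sInf {c | ∃ a, IsGreedyRep s k a ∧ ∑ i, a i = c}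

/-- The final remainder `r_0` of the naive greedy algorithm: for `i = t` down to `1`,
replace the current remainder `r` by `r % s_i`. -/
def greedyRem {t : ℕ} (s : Fin t → ℕ) (k : ℕ) : ℕ :=
  ((List.ofFn s).reverse).foldl (· % ·) k

/-- A counterexample for `S`: a representable `k > 0` with `MinCost_S(k) < GreedyCost_S(k)`. -/
def IsCounterexample {t : ℕ} (s : Fin t → ℕ) (k : ℕ) : Prop :=
  0 < k ∧ Representable s k ∧ minCost s k < greedyCost s k

/-- A witness for `S`: a representable `k > 0` such that for some generator `s i` with
`k - s i` nonnegative and representable, `GreedyCost_S(k) > GreedyCost_S(k - s i) + 1`. -/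
def IsWitness {t : ℕ} (s : Fin t → ℕ) (k : ℕ) : Prop :=
  0 < k ∧ Representable s k ∧ ∃ i : Fin t, s i ≤ k ∧ Representable s (k - s i) ∧
    greedyCost s (k - s i) + 1 < greedyCost s k

-- auxiliary lemmas
def enc {t : ℕ} (k : ℕ) (a : Fin t → ℕ) : ℕ := ∑ i, a i * (k+1)^(i:ℕ)

lemma sum_add_single {t : ℕ} (s b : Fin t → ℕ) (T : Fin t) :
    ∑ j, (b j + if j = T then 1 else 0) * s j = (∑ j, b j * s j) + s T := by
  simp only [add_mul, Finset.sum_add_distrib, ite_mul, one_mul, zero_mul]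
  congr 1
  simp

lemma cost_add_single {t : ℕ} (b : Fin t → ℕ) (T : Fin t) :
    ∑ j, (b j + if j = T then 1 else 0) = (∑ j, b j) + 1 := by
  simp [Finset.sum_add_distrib]

lemma rep_bound {t : ℕ} {s : Fin t → ℕ} (hs : ∀ i, 1 ≤ s i) {k : ℕ} {a : Fin t → ℕ}
    (h : IsRep s k a) (i : Fin t) : a i ≤ k := by
  have h1 : a i * s i ≤ ∑ j, a j * s j :=
    Finset.single_le_sum (f := fun j => a j * s j) (fun j _ => Nat.zero_le _)
      (Finset.mem_univ i)
  have hk : (∑ j, a j * s j) = k := h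
  have h2 : a i * 1 ≤ a i * s i := Nat.mul_le_mul_left _ (hs i)
  omega

lemma geo_lt (k : ℕ) (v : ℕ) : ∑ m ∈ Finset.range v, k * (k+1)^m < (k+1)^v := by
  induction v with
  | zero => simp
  | succ v ih =>
    rw [Finset.sum_range_succ, pow_succ]
    have : (k+1)^v * (k+1) = (k+1)^v + k * (k+1)^v := by ring
    omega

lemma lo_lt {t k : ℕ} (a : Fin t → ℕ) (ha : ∀ j, a j ≤ k) (i : Fin t) :
    ∑ j ∈ Finset.univ.filter (fun j => j < i), a j * (k+1)^(j:ℕ) < (k+1)^(i:ℕ) := by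
  have h1 : ∑ j ∈ Finset.univ.filter (fun j => j < i), a j * (k+1)^(j:ℕ)
      ≤ ∑ j ∈ Finset.univ.filter (fun j => j < i), k * (k+1)^(j:ℕ) :=
    Finset.sum_le_sum fun j _ => mul_le_mul_left (ha j) _
  have h2 : ∑ j ∈ Finset.univ.filter (fun j => j < i), k * (k+1)^(j:ℕ)
      = ∑ m ∈ Finset.range (i:ℕ), k * (k+1)^m := by
    rw [Finset.sum_filter]
    simp only [Fin.lt_def]
    have h3 : ∑ j : Fin t, (if (j:ℕ) < (i:ℕ) then k * (k+1)^(j:ℕ) else 0)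
        = ∑ m ∈ Finset.range t, (if m < (i:ℕ) then k * (k+1)^m else 0) :=
      Fin.sum_univ_eq_sum_range (fun m => if m < (i:ℕ) then k * (k+1)^m else 0) t
    rw [h3, ← Finset.sum_filter]
    congr 1
    ext m
    simp only [Finset.mem_filter, Finset.mem_range]
    have := i.2
    omega
  have := geo_lt k (i:ℕ)
  omega

lemma enc_split {t k : ℕ} (c : Fin t → ℕ) (i : Fin t) :
    enc k c = (∑ j ∈ Finset.univ.filter (fun j => j < i), c j * (k+1)^(j:ℕ))
      + (c i * (k+1)^(i:ℕ)
      + ∑ j ∈ Finset.univ.filter (fun j => i < j), c j * (k+1)^(j:ℕ)) := by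
  rw [enc, ← Finset.sum_filter_add_sum_filter_not Finset.univ (fun j => j < i)]
  congr 1
  have hset : Finset.univ.filter (fun j : Fin t => ¬ j < i)
      = insert i (Finset.univ.filter (fun j => i < j)) := by
    ext j
    simp only [Finset.mem_filter, Finset.mem_univ, true_and, Finset.mem_insert,
      Fin.lt_def, Fin.ext_iff]
    omega
  rw [hset, Finset.sum_insert (by simp)]

lemma enc_lt {t k : ℕ} {a b : Fin t → ℕ} (ha : ∀ j, a j ≤ k) {i : Fin t}
    (hab : a i < b i) (heq : ∀ j, i < j → a j = b j) : enc k a < enc k b := by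
  rw [enc_split a i, enc_split b i]
  have hH : ∑ j ∈ Finset.univ.filter (fun j => i < j), a j * (k+1)^(j:ℕ)
      = ∑ j ∈ Finset.univ.filter (fun j => i < j), b j * (k+1)^(j:ℕ) :=
    Finset.sum_congr rfl fun j hj => by rw [heq j (by simpa using hj)]
  have hlo := lo_lt a ha i
  have hmul : (a i + 1) * (k+1)^(i:ℕ) ≤ b i * (k+1)^(i:ℕ) := mul_le_mul_left hab _
  have hexp : (a i + 1) * (k+1)^(i:ℕ) = a i * (k+1)^(i:ℕ) + (k+1)^(i:ℕ) := by ring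
  omega

lemma minCost_le {t : ℕ} {s : Fin t → ℕ} {k : ℕ} {a : Fin t → ℕ} (h : IsRep s k a) :
    minCost s k ≤ ∑ i, a i := Nat.sInf_le ⟨a, h, rfl⟩

lemma minCost_spec {t : ℕ} {s : Fin t → ℕ} {k : ℕ} (h : Representable s k) :
    ∃ a, IsRep s k a ∧ ∑ i, a i = minCost s k := by
  obtain ⟨a, ha⟩ := h
  have : minCost s k ∈ {c | ∃ a, IsRep s k a ∧ ∑ i, a i = c} :=
    Nat.sInf_mem ⟨_, a, ha, rfl⟩
  exact this

lemma greedy_unique {t : ℕ} {s : Fin t → ℕ} {k : ℕ} {a b : Fin t → ℕ}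
    (ha : IsGreedyRep s k a) (hb : IsGreedyRep s k b) : a = b := by
  rcases hb.2 a ha.1 with h | ⟨i, hi, hij⟩
  · exact h
  rcases ha.2 b hb.1 with h | ⟨i', hi', hij'⟩
  · exact h.symm
  exfalso
  rcases lt_trichotomy i i' with h | h | h
  · rw [hij i' h] at hi'; omega
  · subst h; omega
  · rw [hij' i h] at hi; omega

lemma greedyCost_eq {t : ℕ} {s : Fin t → ℕ} {k : ℕ} {a : Fin t → ℕ}
    (h : IsGreedyRep s k a) : greedyCost s k = ∑ i, a i := by
  have h1 : greedyCost s k ≤ ∑ i, a i := Nat.sInf_le ⟨a, h, rfl⟩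
  have h2 : ∑ i, a i ≤ greedyCost s k := by
    refine le_csInf ⟨∑ i, a i, a, h, rfl⟩ ?_
    rintro c ⟨b, hb, rfl⟩
    rw [greedy_unique h hb]
  omega

lemma exists_greedy {t : ℕ} {s : Fin t → ℕ} (hs : ∀ i, 1 ≤ s i) {k : ℕ}
    (h : Representable s k) : ∃ a, IsGreedyRep s k a := by
  obtain ⟨a0, ha0⟩ := h
  have hbdd : BddAbove {n | ∃ a, IsRep s k a ∧ enc k a = n} := by
    refine ⟨∑ i : Fin t, k * (k+1)^(i:ℕ), ?_⟩
    rintro n ⟨a, ha, rfl⟩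
    exact Finset.sum_le_sum fun j _ => mul_le_mul_left (rep_bound hs ha j) _
  obtain ⟨a, ha, hmax⟩ : sSup {n | ∃ a, IsRep s k a ∧ enc k a = n}
      ∈ {n | ∃ a, IsRep s k a ∧ enc k a = n} := Nat.sSup_mem ⟨_, a0, ha0, rfl⟩ hbdd
  refine ⟨a, ha, ?_⟩
  intro b hb
  by_cases hba : b = a
  · exact Or.inl hba
  right
  have hFne : (Finset.univ.filter (fun j => b j ≠ a j)).Nonempty := by
    rcases Function.ne_iff.mp hba with ⟨j, hj⟩
    exact ⟨j, by simp [hj]⟩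
  set i := Finset.max' _ hFne with hidef
  have hi : b i ≠ a i := (Finset.mem_filter.mp (Finset.max'_mem _ hFne)).2
  have hup : ∀ j, i < j → b j = a j := by
    intro j hj
    by_contra hne'
    have : j ≤ i := Finset.le_max' _ j (by simp [hne'])
    exact absurd hj (not_lt.mpr this)
  rcases lt_or_gt_of_ne hi with hlt | hgt
  · exact ⟨i, hlt, hup⟩
  · exfalso
    have h1 : enc k a < enc k b := enc_lt (rep_bound hs ha) hgt (fun j hj => (hup j hj).symm)
    have h2 : enc k b ≤ sSup {n | ∃ a, IsRep s k a ∧ enc k a = n} := le_csSup hbdd ⟨b, hb, rfl⟩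
    omega

lemma greedy_step {t : ℕ} {s : Fin t → ℕ} (hs : ∀ i, 1 ≤ s i) (T : Fin t)
    (hT : ∀ j : Fin t, ¬ T < j) {k : ℕ} (hk : Representable s k) (hTk : s T ≤ k)
    (hk' : Representable s (k - s T)) :
    greedyCost s k = greedyCost s (k - s T) + 1 := by
  obtain ⟨g, hg⟩ := exists_greedy hs hk
  have hbump : ∀ b : Fin t → ℕ, IsRep s (k - s T) b →
      IsRep s k (fun j => b j + if j = T then 1 else 0) := by
    intro b hb
    show ∑ j, (b j + if j = T then 1 else 0) * s j = k
    rw [sum_add_single]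
    have hb2 : (∑ j, b j * s j) = k - s T := hb
    omega
  have hgT : 1 ≤ g T := by
    obtain ⟨b, hb⟩ := hk'
    have hb' := hbump b hb
    rcases hg.2 _ hb' with h | ⟨i, hi, hij⟩
    · have := congrFun h T
      simp at this
      omega
    · by_cases hiT : i = T
      · subst hiT
        simp at hi
        omega
      · have hlt : i < T := lt_of_le_of_ne (not_lt.mp (hT i)) hiT
        have := hij T hlt
        simp at this
        omega
  set g' : Fin t → ℕ := fun j => g j - if j = T then 1 else 0 with hg'def
  have hgg' : ∀ j, g' j + (if j = T then 1 else 0) = g j := by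
    intro j
    by_cases h : j = T <;> simp [hg'def, h]
    omega
  have hg'rep : IsRep s (k - s T) g' := by
    have h1 : ∑ j, (g' j + if j = T then 1 else 0) * s j = (∑ j, g' j * s j) + s T :=
      sum_add_single s g' T
    have h2 : ∑ j, (g' j + if j = T then 1 else 0) * s j = ∑ j, g j * s j :=
      Finset.sum_congr rfl fun j _ => by rw [hgg' j]
    have h3 : (∑ j, g j * s j) = k := hg.1
    show ∑ j, g' j * s j = k - s T
    omega
  have hg'greedy : IsGreedyRep s (k - s T) g' := by
    refine ⟨hg'rep, ?_⟩
    intro b hb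
    rcases hg.2 _ (hbump b hb) with h | ⟨i, hi, hij⟩
    · left
      funext j
      have h1 := congrFun h j
      have h2 := hgg' j
      by_cases hj : j = T
      · subst hj; simp at h1 h2; omega
      · simp [hj] at h1 h2; omega
    · right
      by_cases hiT : i = T
      · refine ⟨T, ?_, fun j hj => absurd hj (hT j)⟩
        rw [hiT] at hi
        have h2 := hgg' T
        simp at hi h2
        omega
      · have hiltT : i < T := lt_of_le_of_ne (not_lt.mp (hT i)) hiT
        refine ⟨i, ?_, ?_⟩
        · have h2 := hgg' i
          simp only [if_neg hiT] at hi h2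
          omega
        · intro j hj
          have h1 := hij j hj
          have h2 := hgg' j
          by_cases hjT : j = T
          · subst hjT; simp at h1 h2; omega
          · simp [hjT] at h1 h2; omega
  rw [greedyCost_eq hg, greedyCost_eq hg'greedy]
  have h1 := cost_add_single g' T
  have h2 : ∑ j, (g' j + if j = T then 1 else 0) = ∑ j, g j :=
    Finset.sum_congr rfl fun j _ => by rw [hgg' j]
  omega


/-- If `MinCost_S(k) = GreedyCost_S(k)` for every representable
`0 < k ≤ F(S) + s_t + s_{t-1}`, then this holds for every representable `k > 0`;
equivalently, the smallest counterexample (if any) is at most `F(S) + s_t + s_{t-1}`. -/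
theorem counterexample_upper_bound {t : ℕ} (ht : 3 ≤ t)
    (s : Fin t → ℕ) (hmono : StrictMono s) (hone : 1 < s ⟨0, by omega⟩)
    (hgcd : Finset.univ.gcd s = 1)
    (F : ℕ) (hF : ¬ Representable s F) (hF' : ∀ m : ℕ, F < m → Representable s m)
    (hbelow : ∀ k : ℕ, 0 < k → k ≤ F + s ⟨t - 1, by omega⟩ + s ⟨t - 2, by omega⟩ →
      Representable s k → minCost s k = greedyCost s k) :
    ∀ k : ℕ, 0 < k → Representable s k → minCost s k = greedyCost s k := by
  have hs1 : ∀ i : Fin t, 1 ≤ s i := by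
    intro i
    have h0 : (⟨0, by omega⟩ : Fin t) ≤ i := by simp [Fin.le_def]
    have := hmono.monotone h0
    omega
  set T1 : Fin t := ⟨t - 1, by omega⟩ with hT1def
  set T2 : Fin t := ⟨t - 2, by omega⟩ with hT2def
  have hvT1 : (T1 : ℕ) = t - 1 := rfl
  have hvT2 : (T2 : ℕ) = t - 2 := rfl
  have hTtop : ∀ j : Fin t, ¬ T1 < j := by
    intro j hj
    rw [Fin.lt_def] at hj
    have := j.2
    omega
  have hT2T1 : s T2 < s T1 := hmono (by rw [Fin.lt_def]; omega)
  intro k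
  induction k using Nat.strong_induction_on with
  | _ k IH =>
    intro hk hrep
    by_cases hkB : k ≤ F + s T1 + s T2
    · exact hbelow k hk hkB hrep
    push_neg at hkB
    obtain ⟨g, hg⟩ := exists_greedy hs1 hrep
    have hle : minCost s k ≤ greedyCost s k := by
      rw [greedyCost_eq hg]
      exact minCost_le hg.1
    refine le_antisymm hle ?_
    obtain ⟨a, harep, hacost⟩ := minCost_spec hrep
    have ha : ∑ i, a i * s i = k := harep
    have hex : ∃ i, 1 ≤ a i := by
      by_contra hcon
      push_neg at hcon
      have hz : ∑ i, a i * s i = 0 := Finset.sum_eq_zero fun i _ => by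
        have h0 : a i = 0 := by have := hcon i; omega
        rw [h0, zero_mul]
      omega
    obtain ⟨i, hi⟩ := hex
    have hsi_le : s i ≤ k := by
      have h1 : a i * s i ≤ ∑ j, a j * s j :=
        Finset.single_le_sum (f := fun j => a j * s j) (fun j _ => Nat.zero_le _)
          (Finset.mem_univ i)
      have h2 : 1 * s i ≤ a i * s i := mul_le_mul_left hi _
      omega
    have hm1 : 1 ≤ ∑ j, a j :=
      le_trans hi (Finset.single_le_sum (fun j _ => Nat.zero_le _) (Finset.mem_univ i))
    set a' : Fin t → ℕ := fun j => a j - if j = i then 1 else 0 with ha'def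
    have haa' : ∀ j, a' j + (if j = i then 1 else 0) = a j := by
      intro j
      by_cases h : j = i
      · subst h; simp [ha'def]; omega
      · simp [ha'def, h]
    have ha'rep : IsRep s (k - s i) a' := by
      have h1 : ∑ j, (a' j + if j = i then 1 else 0) * s j = (∑ j, a' j * s j) + s i :=
        sum_add_single s a' i
      have h2 : ∑ j, (a' j + if j = i then 1 else 0) * s j = ∑ j, a j * s j :=
        Finset.sum_congr rfl fun j _ => by rw [haa' j]
      show ∑ j, a' j * s j = k - s i
      omega
    have ha'cost : ∑ j, a' j = (∑ j, a j) - 1 := by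
      have h1 := cost_add_single a' i
      have h2 : ∑ j, (a' j + if j = i then 1 else 0) = ∑ j, a j :=
        Finset.sum_congr rfl fun j _ => by rw [haa' j]
      omega
    have h5 : minCost s (k - s i) ≤ (∑ j, a j) - 1 := by
      have := minCost_le ha'rep
      omega
    have hsT1pos := hs1 T1
    have hsT2pos := hs1 T2
    have hT1k : s T1 ≤ k := by omega
    have hK1F : F < k - s T1 := by omega
    have hstep1 := greedy_step hs1 T1 hTtop hrep hT1k (hF' _ hK1F)
    have hIH1 : minCost s (k - s T1) = greedyCost s (k - s T1) :=
      IH _ (by omega) (by omega) (hF' _ hK1F)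
    by_cases hiT : i = T1
    · rw [hiT] at h5
      omega
    · have hsiT2 : s i ≤ s T2 := by
        have hne : (i : ℕ) ≠ t - 1 := fun hv => hiT (Fin.ext (hv.trans hvT1.symm))
        have h2 := i.2
        exact hmono.monotone (by rw [Fin.le_def]; omega)
      have hK2F : F < k - s i := by omega
      have hK2rep : Representable s (k - s i) := ⟨a', ha'rep⟩
      have hsipos := hs1 i
      have hIH2 : minCost s (k - s i) = greedyCost s (k - s i) :=
        IH _ (by omega) (by omega) hK2rep
      have hT1K2 : s T1 ≤ k - s i := by omega
      have hK3F : F < k - s i - s T1 := by omega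
      have hK3rep := hF' _ hK3F
      have hstep2 := greedy_step hs1 T1 hTtop hK2rep hT1K2 hK3rep
      have hIH3 : minCost s (k - s i - s T1) = greedyCost s (k - s i - s T1) :=
        IH _ (by omega) (by omega) hK3rep
      obtain ⟨c, hcrep, hccost⟩ := minCost_spec hK3rep
      have hc : ∑ j, c j * s j = k - s i - s T1 := hcrep
      have hc'rep : IsRep s (k - s T1) (fun j => c j + if j = i then 1 else 0) := by
        show ∑ j, (c j + if j = i then 1 else 0) * s j = k - s T1
        rw [sum_add_single, hc]
        omega
      have h4 : minCost s (k - s T1) ≤ minCost s (k - s i - s T1) + 1 := by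
        have h6 := minCost_le hc'rep
        have h7 := cost_add_single c i
        omega
      omega
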